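/- arXiv:2412.20661 — 6 statements merged into one kernel-verified Lean document; each statement's English description precedes it below -/
import Mathlib

section
/- Let T be a finite combinatorial tree on n nodes and let i be a node. Then ∑_{j ∈ V} d(i,j)·(2 − deg(j)) = n − 1. -/
open Finset SimpleGraph

section Aux

variable {V : Type*} [DecidableEq V] {G : SimpleGraph V}

/-- A vertex on a walk has distance at most the length oG.dist i the walk. -/
lemma aux_dist_le_of_mem_support {i u x : V} (p : G.Walk i u) (hx : x ∈ p.support) :
    G.dist i x ≤ p.length := by
  calc G.dist i x ≤ (p.takeUntil x hx).length := SimpleGraph.dist_le _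
    _ ≤ p.length := SimpleGraph.Walk.length_takeUntil_le p hx

/-- In a tree, adjacent vertices have distances to `i` differing by exactly one. -/
lemma aux_adj_dist (hT : G.IsTree) {i u v : V} (h : G.Adj u v) :
    G.dist i v = G.dist i u + 1 ∨ G.dist i u = G.dist i v + 1 := by
  have hconn := hT.isConnected
  have huv : G.dist u v = 1 := (SimpleGraph.dist_eq_one_iff_adj).mpr h
  have hvu : G.dist v u = 1 := (SimpleGraph.dist_eq_one_iff_adj).mpr h.symm
  have h1 : G.dist i v ≤ G.dist i u + 1 := by
    have := hconn.dist_triangle (u := i) (v := u) (w := v); omega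
  have h2 : G.dist i u ≤ G.dist i v + 1 := by
    have := hconn.dist_triangle (u := i) (v := v) (w := u); omega
  have hne : G.dist i u ≠ G.dist i v := by
    intro heq
    obtain ⟨p, hp, hpl⟩ := hconn.exists_path_of_dist i u
    have hvns : v ∉ p.support := by
      intro hv
      have h3 : G.dist i v ≤ (p.takeUntil v hv).length := SimpleGraph.dist_le _
      have h4 : (p.takeUntil v hv).length + (p.dropUntil v hv).length = p.length := by
        have := congrArg SimpleGraph.Walk.length (p.take_spec hv)
        rwa [SimpleGraph.Walk.length_append] at this
      have h5 : (p.dropUntil v hv).length = 0 := by omega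
      exact h.ne' (SimpleGraph.Walk.eq_of_length_eq_zero h5)
    have hq : (p.concat h).IsPath := by
      rw [← SimpleGraph.Walk.isPath_reverse_iff, SimpleGraph.Walk.reverse_concat]
      refine SimpleGraph.Walk.IsPath.cons (hp.reverse) ?_
      rw [SimpleGraph.Walk.support_reverse, List.mem_reverse]
      exact hvns
    obtain ⟨r, hr, hrl⟩ := hconn.exists_path_of_dist i v
    have heq2 := (hT.existsUnique_path i v).unique hq hr
    have hlen := congrArg SimpleGraph.Walk.length heq2
    rw [SimpleGraph.Walk.length_concat] at hlen
    omega
  omega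

/-- In a tree, every vertex `j ≠ i` has a neighbor strictly closer to `i`. -/
lemma aux_parent_exists (hT : G.IsTree) {i j : V} (hj : j ≠ i) :
    ∃ k, G.Adj k j ∧ G.dist i k + 1 = G.dist i j := by
  have hconn := hT.isConnected
  have hd0 : G.dist i j ≠ 0 := fun h0 => hj ((hconn.dist_eq_zero_iff).mp h0).symm
  obtain ⟨w, hw⟩ := hconn.exists_walk_length_eq_dist i j
  obtain ⟨k, hadj, q, hq⟩ := SimpleGraph.Walk.exists_eq_cons_of_ne hj w.reverse
  have hql : q.length + 1 = G.dist i j := by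
    have := congrArg SimpleGraph.Walk.length hq
    rw [SimpleGraph.Walk.length_reverse, SimpleGraph.Walk.length_cons] at this
    omega
  have hk1 : G.dist i k ≤ q.length := by
    rw [SimpleGraph.dist_comm]
    exact SimpleGraph.dist_le q
  rcases aux_adj_dist hT (i := i) hadj.symm with hc | hc
  · exact ⟨k, hadj.symm, by omega⟩
  · omega

/-- In a tree, the closer neighbor is unique. -/
lemma aux_parent_unique (hT : G.IsTree) {i j k₁ k₂ : V}
    (h₁ : G.Adj k₁ j ∧ G.dist i k₁ + 1 = G.dist i j)
    (h₂ : G.Adj k₂ j ∧ G.dist i k₂ + 1 = G.dist i j) : k₁ = k₂ := by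
  obtain ⟨ha₁, hd₁⟩ := h₁
  obtain ⟨ha₂, hd₂⟩ := h₂
  have hconn := hT.isConnected
  obtain ⟨p₁, hp₁, hl₁⟩ := hconn.exists_path_of_dist i k₁
  obtain ⟨p₂, hp₂, hl₂⟩ := hconn.exists_path_of_dist i k₂
  have hj₁ : j ∉ p₁.support := fun hmem => by
    have := aux_dist_le_of_mem_support p₁ hmem; omega
  have hj₂ : j ∉ p₂.support := fun hmem => by
    have := aux_dist_le_of_mem_support p₂ hmem; omega
  have hq₁ : (p₁.concat ha₁).IsPath := by
    rw [← SimpleGraph.Walk.isPath_reverse_iff, SimpleGraph.Walk.reverse_concat]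
    refine SimpleGraph.Walk.IsPath.cons (hp₁.reverse) ?_
    rw [SimpleGraph.Walk.support_reverse, List.mem_reverse]; exact hj₁
  have hq₂ : (p₂.concat ha₂).IsPath := by
    rw [← SimpleGraph.Walk.isPath_reverse_iff, SimpleGraph.Walk.reverse_concat]
    refine SimpleGraph.Walk.IsPath.cons (hp₂.reverse) ?_
    rw [SimpleGraph.Walk.support_reverse, List.mem_reverse]; exact hj₂
  have heq : p₁.concat ha₁ = p₂.concat ha₂ := (hT.existsUnique_path i j).unique hq₁ hq₂
  have hrev := congrArg SimpleGraph.Walk.reverse heq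
  rw [SimpleGraph.Walk.reverse_concat, SimpleGraph.Walk.reverse_concat] at hrev
  have hsup := congrArg SimpleGraph.Walk.support hrev
  rw [SimpleGraph.Walk.support_cons, SimpleGraph.Walk.support_cons,
    SimpleGraph.Walk.support_eq_cons p₁.reverse,
    SimpleGraph.Walk.support_eq_cons p₂.reverse] at hsup
  simp only [List.cons.injEq] at hsup
  exact hsup.2.1

end Aux

theorem stmt_2 {V : Type*} [Fintype V] [DecidableEq V] (G : SimpleGraph V)
    [DecidableRel G.Adj] (hT : G.IsTree) (i : V) :
    ∑ j, (G.dist i j : ℝ) * (2 - (G.degree j : ℝ)) = (Fintype.card V : ℝ) - 1 := by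
  classical
  have hfi : G.dist i i = 0 := SimpleGraph.dist_self
  -- Step 1: sum over darts
  have step1 : ∑ d : G.Dart, G.dist i d.fst = ∑ v, G.degree v * G.dist i v := by
    rw [← Finset.sum_fiberwise Finset.univ (fun d : G.Dart => d.fst) (fun d => G.dist i d.fst)]
    refine Finset.sum_congr rfl fun v _ => ?_
    calc ∑ d ∈ Finset.univ.filter (fun d : G.Dart => d.fst = v), G.dist i d.fst
        = ∑ _d ∈ Finset.univ.filter (fun d : G.Dart => d.fst = v), G.dist i v :=
          Finset.sum_congr rfl (fun d hd => by
            rw [Finset.mem_filter] at hd; rw [hd.2])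
      _ = G.degree v * G.dist i v := by
          rw [Finset.sum_const, smul_eq_mul, G.dart_fst_fiber_card_eq_degree v]
  -- the set of "away" darts
  set P : Finset G.Dart := Finset.univ.filter (fun d : G.Dart => G.dist i d.fst + 1 = G.dist i d.snd) with hP
  have hdart : ∀ d : G.Dart, d ∉ P ↔ G.dist i d.snd + 1 = G.dist i d.fst := by
    intro d
    rcases aux_adj_dist hT (i := i) d.adj with hc | hc <;>
      simp only [hP, Finset.mem_filter, Finset.mem_univ, true_and] <;>
      constructor <;> intro <;> omega
  -- Step 2: pair darts via symm
  have step2 : ∑ d : G.Dart, G.dist i d.fst = ∑ d ∈ P, G.dist i d.fst + ∑ d ∈ P, G.dist i d.snd := by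
    rw [← Finset.sum_filter_add_sum_filter_not Finset.univ (fun d : G.Dart => d ∈ P)
      (fun d => G.dist i d.fst)]
    congr 1
    · exact Finset.sum_congr (by ext d; simp) (fun _ _ => rfl)
    · refine Finset.sum_nbij' (fun d => SimpleGraph.Dart.symm d)
        (fun d => SimpleGraph.Dart.symm d) ?_ ?_ ?_ ?_ ?_
      · intro d hd
        simp only [Finset.mem_filter, Finset.mem_univ, true_and] at hd
        rw [hdart] at hd
        simp only [hP, Finset.mem_filter, Finset.mem_univ, true_and]
        simpa using hd
      · intro d hd
        simp only [hP, Finset.mem_filter, Finset.mem_univ, true_and] at hd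
        simp only [Finset.mem_filter, Finset.mem_univ, true_and]
        rw [hdart]
        simpa using hd
      · intro d _; exact SimpleGraph.Dart.symm_symm d
      · intro d _; exact SimpleGraph.Dart.symm_symm d
      · intro d _; rfl
  have step2' : ∑ d ∈ P, G.dist i d.snd = ∑ d ∈ P, G.dist i d.fst + P.card := by
    rw [Finset.card_eq_sum_ones, ← Finset.sum_add_distrib]
    refine Finset.sum_congr rfl fun d hd => ?_
    simp only [hP, Finset.mem_filter, Finset.mem_univ, true_and] at hd
    omega
  -- Step 3: bijection between away darts and vertices ≠ i
  have step3 : ∀ (g : V → ℕ), ∑ d ∈ P, g d.snd = ∑ j ∈ Finset.univ.erase i, g j := by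
    intro g
    refine Finset.sum_bij' (fun d _ => d.snd)
      (fun j hj =>
        (⟨((aux_parent_exists hT (Finset.mem_erase.mp hj).1).choose, j),
          (aux_parent_exists hT (Finset.mem_erase.mp hj).1).choose_spec.1⟩ : G.Dart))
      ?_ ?_ ?_ ?_ ?_
    · intro d hd
      simp only [hP, Finset.mem_filter, Finset.mem_univ, true_and] at hd
      show d.snd ∈ Finset.univ.erase i
      refine Finset.mem_erase.mpr ⟨?_, Finset.mem_univ _⟩
      intro h
      rw [h] at hd
      simp [SimpleGraph.dist_self] at hd
    · intro j hj
      have hspec := (aux_parent_exists hT (Finset.mem_erase.mp hj).1).choose_spec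
      simp only [hP, Finset.mem_filter, Finset.mem_univ, true_and]
      exact hspec.2
    · intro d hd
      simp only [hP, Finset.mem_filter, Finset.mem_univ, true_and] at hd
      have hdi : d.snd ≠ i := by
        intro h; rw [h] at hd; simp [SimpleGraph.dist_self] at hd
      have hj : d.snd ∈ Finset.univ.erase i := Finset.mem_erase.mpr ⟨hdi, Finset.mem_univ _⟩
      have hspec := (aux_parent_exists hT (Finset.mem_erase.mp hj).1).choose_spec
      have hkey : (aux_parent_exists hT (Finset.mem_erase.mp hj).1).choose = d.fst :=
        aux_parent_unique hT (i := i) (j := d.snd) ⟨hspec.1, hspec.2⟩ ⟨d.adj, hd⟩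
      exact SimpleGraph.Dart.ext _ _ (Prod.ext hkey rfl)
    · intro j hj
      rfl
    · intro d _; rfl
  have hcardP : P.card = Fintype.card V - 1 := by
    have h1 := step3 (fun _ => 1)
    simp only [Finset.sum_const, smul_eq_mul, mul_one] at h1
    rw [h1, Finset.card_erase_of_mem (Finset.mem_univ i), Finset.card_univ]
  have hsum_erase : ∑ j ∈ Finset.univ.erase i, G.dist i j = ∑ j, G.dist i j :=
    Finset.sum_erase Finset.univ hfi
  -- the key natural number identity
  have key : ∑ v, G.degree v * G.dist i v + (Fintype.card V - 1) = 2 * ∑ v, G.dist i v := by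
    have h3 := step3 (G.dist i)
    rw [hsum_erase] at h3
    omega
  -- pass to the reals
  have h1le : 1 ≤ Fintype.card V := Fintype.card_pos_iff.mpr ⟨i⟩ |> Nat.one_le_iff_ne_zero.mpr ∘ Nat.pos_iff_ne_zero.mp
  have keyR : (∑ v, (G.degree v : ℝ) * (G.dist i v : ℝ)) + ((Fintype.card V : ℝ) - 1)
      = 2 * ∑ v, (G.dist i v : ℝ) := by
    have hcast := congrArg (fun n : ℕ => (n : ℝ)) key
    push_cast [Nat.cast_sub h1le] at hcast
    convert hcast using 2
  have expand : ∑ j, (G.dist i j : ℝ) * (2 - (G.degree j : ℝ))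
      = 2 * (∑ j, (G.dist i j : ℝ)) - ∑ j, (G.degree j : ℝ) * (G.dist i j : ℝ) := by
    rw [Finset.mul_sum, ← Finset.sum_sub_distrib]
    exact Finset.sum_congr rfl fun j _ => by ring
  calc ∑ j, (G.dist i j : ℝ) * (2 - (G.degree j : ℝ))
      = ∑ j, (G.dist i j : ℝ) * (2 - (G.degree j : ℝ)) := rfl
    _ = (Fintype.card V : ℝ) - 1 := by rw [expand]; linarith [keyR]
end

section
/- Let T be a finite combinatorial tree on n ≥ 2 nodes with diameter D. Then D ≥ (n−1) / ∑_{i ∈ V} |2 − deg(i)|. -/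
/-!
Root the tree at a vertex `r`. Walking away from `r` as long as possible shows that every
vertex `v ≠ r` lies on the path from `r` to some leaf `l`, and on that unique path `v` is
determined by `l` and `dist r v`. So `v ↦ (dist r v, l)` embeds `V \ {r}` into
`[1, D] × leaves`, giving `n - 1 ≤ D · #leaves`; each leaf contributes `|2 - 1| = 1` to
`∑ |2 - deg|`.
-/

open SimpleGraph Finset

namespace SimpleGraph

variable {V : Type*} {G : SimpleGraph V}

theorem IsTree.getVert_dist_eq_of_dist_eq_add (hT : G.IsTree) {r x l : V} {P : G.Walk r l}
    (hP : P.IsPath) (hx : G.dist r l = G.dist r x + G.dist x l) : P.getVert (G.dist r x) = x := by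
  obtain ⟨p, -, hp⟩ := hT.connected.exists_path_of_dist r x
  obtain ⟨q, -, hq⟩ := hT.connected.exists_path_of_dist x l
  have hpq : (p.append q).IsPath :=
    (p.append q).isPath_of_length_eq_dist (by rw [Walk.length_append]; omega)
  rw [← (hT.existsUnique_path r l).unique hpq hP, Walk.getVert_append]
  simp [hp]

theorem IsTree.eq_of_dist_eq_of_dist_eq_add (hT : G.IsTree) {r x y l : V}
    (hxy : G.dist r x = G.dist r y) (hx : G.dist r l = G.dist r x + G.dist x l)
    (hy : G.dist r l = G.dist r y + G.dist y l) : x = y := by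
  obtain ⟨P, hP, -⟩ := hT.connected.exists_path_of_dist r l
  rw [← hT.getVert_dist_eq_of_dist_eq_add hP hx, ← hT.getVert_dist_eq_of_dist_eq_add hP hy, hxy]

theorem IsTree.exists_adj_dist_eq_add_one (hT : G.IsTree) (r : V) {v : V}
    [Fintype (G.neighborSet v)] (hv : 2 ≤ G.degree v) :
    ∃ w, G.Adj v w ∧ G.dist r w = G.dist r v + 1 := by
  obtain ⟨w₁, hw₁, w₂, hw₂, hne⟩ := one_lt_card.mp (G.card_neighborFinset_eq_degree v ▸ hv)
  rw [mem_neighborFinset] at hw₁ hw₂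
  by_contra! h
  have parent : ∀ w, G.Adj v w → G.dist r v = G.dist r w + 1 := fun w hw =>
    (hT.dist_eq_dist_add_one_of_adj r hw).resolve_right (h w hw)
  have d₁ := dist_eq_one_iff_adj.mpr hw₁.symm
  have d₂ := dist_eq_one_iff_adj.mpr hw₂.symm
  have p₁ := parent w₁ hw₁
  have p₂ := parent w₂ hw₂
  exact hne <| hT.eq_of_dist_eq_of_dist_eq_add (r := r) (l := v) (by omega) (by omega) (by omega)

variable [Fintype V] [DecidableRel G.Adj]

variable (G) in
theorem card_degree_eq_one_le_sum_abs_two_sub_degree :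
    (#{v | G.degree v = 1} : ℝ) ≤ ∑ v, |2 - (G.degree v : ℝ)| := by
  calc (#{v | G.degree v = 1} : ℝ) = ∑ v with G.degree v = 1, |2 - (G.degree v : ℝ)| := by
        rw [sum_congr rfl fun v hv => by rw [(mem_filter.mp hv).2]]
        norm_num
    _ ≤ ∑ v, |2 - (G.degree v : ℝ)| :=
        sum_le_sum_of_subset_of_nonneg (subset_univ _) fun _ _ _ => abs_nonneg _

theorem IsTree.exists_degree_eq_one_dist_eq_add (hT : G.IsTree) {r v : V} (hv : v ≠ r) :
    ∃ l, G.degree l = 1 ∧ G.dist r l = G.dist r v + G.dist v l := by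
  classical
  obtain ⟨l, hl, hmax⟩ := exists_max_image {l | G.dist r l = G.dist r v + G.dist v l}
    (G.dist r) ⟨v, by simp⟩
  rw [mem_filter_univ] at hl
  refine ⟨l, ?_, hl⟩
  have hlr : l ≠ r := by
    rintro rfl
    have := hT.connected.pos_dist_of_ne hv.symm
    rw [dist_self] at hl
    omega
  have hpos := (hT.connected r l).degree_pos_right hlr.symm
  by_contra hne
  obtain ⟨w, hlw, hw⟩ := hT.exists_adj_dist_eq_add_one r (v := l) (by omega)
  have hvw : G.dist v w ≤ G.dist v l + G.dist l w := hT.connected.dist_triangle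
  have hrw : G.dist r w ≤ G.dist r v + G.dist v w := hT.connected.dist_triangle
  have hlw₁ := dist_eq_one_iff_adj.mpr hlw
  have hwl := hmax w ((mem_filter_univ w).mpr (by omega))
  omega

theorem IsTree.card_le_mul_card_degree_eq_one_add_one (hT : G.IsTree) (r : V) {D : ℕ}
    (hD : ∀ v, G.dist r v ≤ D) : Fintype.card V ≤ D * #{v | G.degree v = 1} + 1 := by
  classical
  choose! leaf hleaf hdist using fun v (hv : v ≠ r) => hT.exists_degree_eq_one_dist_eq_add hv
  have hinj : #(univ.erase r) ≤ #(Icc 1 D ×ˢ ({v | G.degree v = 1} : Finset V)) := by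
    refine card_le_card_of_injOn (fun v => (G.dist r v, leaf v)) (fun v hv => ?_) ?_
    · have hv := ne_of_mem_erase hv
      rw [coe_product, Set.mem_prod, mem_coe, mem_coe, mem_Icc, mem_filter_univ]
      exact ⟨⟨hT.connected.pos_dist_of_ne hv.symm, hD v⟩, hleaf v hv⟩
    · intro v hv w hw hvw
      simp only [Prod.mk.injEq] at hvw
      have hw := hdist w (ne_of_mem_erase hw)
      rw [← hvw.2] at hw
      exact hT.eq_of_dist_eq_of_dist_eq_add hvw.1 (hdist v (ne_of_mem_erase hv)) hw
  rw [card_erase_of_mem (mem_univ r), card_univ, card_product, Nat.card_Icc,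
    Nat.add_sub_cancel] at hinj
  omega

end SimpleGraph

theorem stmt_5_general {V : Type*} [Fintype V] (G : SimpleGraph V)
    [DecidableRel G.Adj] (hT : G.IsTree) :
    ((Finset.univ.sup fun p : V × V => G.dist p.1 p.2 : ℕ) : ℝ) ≥
      ((Fintype.card V : ℝ) - 1) / ∑ i, |2 - (G.degree i : ℝ)| := by
  set D := Finset.univ.sup fun p : V × V => G.dist p.1 p.2
  set S := ∑ i, |2 - (G.degree i : ℝ)|
  obtain ⟨r⟩ := hT.connected.nonempty
  have hcount := hT.card_le_mul_card_degree_eq_one_add_one r (D := D) fun v =>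
    le_sup (f := fun p : V × V => G.dist p.1 p.2) (mem_univ (r, v))
  have hleaves := G.card_degree_eq_one_le_sum_abs_two_sub_degree
  refine div_le_of_le_mul₀ (sum_nonneg fun i _ => abs_nonneg _) (Nat.cast_nonneg D) ?_
  calc (Fintype.card V : ℝ) - 1 ≤ D * #{v | G.degree v = 1} := by
        rw [sub_le_iff_le_add]; exact_mod_cast hcount
    _ ≤ D * S := by gcongr

theorem stmt_5 {V : Type*} [Fintype V] [DecidableEq V] (G : SimpleGraph V)
    [DecidableRel G.Adj] (hT : G.IsTree) (hn : 2 ≤ Fintype.card V) :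
    ((Finset.univ.sup fun p : V × V => G.dist p.1 p.2 : ℕ) : ℝ) ≥
      ((Fintype.card V : ℝ) - 1) / ∑ i, |2 - (G.degree i : ℝ)| :=
  stmt_5_general G hT
end

section
/- Let T = (V,E) be a finite tree with a choice of orientation for each edge, and let μ, ν be probability measures on V. For an oriented edge e = (i,j), define K_μ(e) = ∑_{k ∈ V*(i;e)} μ(k), where V*(i;e) is the set of nodes in the component of T − e containing i. Then J = K_μ − K_ν satisfies B·J = μ − ν, where B is the oriented incidence matrix. -/
/-!
Writing `f = μ - ν` and expanding `K_f(e) = ∑ k, 1[k ∈ V*(s e; e)] f k`, the `i`-th entry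
of `B J` is `∑ k, c k * f k` with `c k = ∑ e, B i e * 1[k ∈ V*(s e; e)]`. For an edge entering
`i` the two sides of `T - e` are complementary, so `c k` is the number of edges leaving `i`
minus the number of edges at `i` that separate `i` from `k`. In a tree the latter is `0` for
`k = i` and exactly `1` otherwise (the first edge of the path from `i` to `k`). As
`∑ k, f k = 0`, only `f i` survives.
-/

open scoped Classical in
/-- `Kcut G s t μ e` is the total `μ`-mass of the component of `T - e`
containing the source of the oriented edge `e`. -/
noncomputable def Kcut {V E : Type*} [Fintype V] (G : SimpleGraph V)
    (s t : E → V) (μ : V → ℝ) (e : E) : ℝ :=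
  ∑ k, if (G.deleteEdges {Sym2.mk (s e) (t e)}).Reachable (s e) k then μ k else 0

namespace SimpleGraph

variable {V : Type*} {G : SimpleGraph V}

lemma Walk.reachable_deleteEdges_or {a b x y : V} (w : G.Walk x y)
    (hx : (G.deleteEdges {s(a, b)}).Reachable a x ∨ (G.deleteEdges {s(a, b)}).Reachable b x) :
    (G.deleteEdges {s(a, b)}).Reachable a y ∨ (G.deleteEdges {s(a, b)}).Reachable b y := by
  induction w with
  | nil => exact hx
  | @cons u v z huv _ ih =>
    apply ih
    by_cases he : s(u, v) = s(a, b)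
    · rcases Sym2.eq_iff.mp he with ⟨rfl, rfl⟩ | ⟨rfl, rfl⟩
      · exact Or.inr .rfl
      · exact Or.inl .rfl
    · have huv' : (G.deleteEdges {s(a, b)}).Adj u v := by
        simpa only [deleteEdges_adj, Set.mem_singleton_iff] using ⟨huv, he⟩
      exact hx.imp (·.trans huv'.reachable) (·.trans huv'.reachable)

lemma Preconnected.reachable_deleteEdges_or (hG : G.Preconnected) (a b y : V) :
    (G.deleteEdges {s(a, b)}).Reachable a y ∨ (G.deleteEdges {s(a, b)}).Reachable b y :=
  (hG a y).some.reachable_deleteEdges_or (Or.inl .rfl)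

lemma IsTree.reachable_deleteEdges_iff (hT : G.IsTree) {a b : V} (hab : G.Adj a b) (y : V) :
    (G.deleteEdges {s(a, b)}).Reachable a y ↔ ¬ (G.deleteEdges {s(a, b)}).Reachable b y := by
  have hbridge : ¬ (G.deleteEdges {s(a, b)}).Reachable a b :=
    isBridge_iff.mp (isAcyclic_iff_forall_adj_isBridge.mp hT.isAcyclic hab)
  refine ⟨fun hay hby => hbridge (hay.trans hby.symm), fun hby => ?_⟩
  exact (hT.connected.preconnected.reachable_deleteEdges_or a b y).resolve_right hby

/-- The separating neighbour is the second vertex of the path from `i` to `k`. -/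
lemma IsTree.existsUnique_adj_not_reachable_deleteEdges (hT : G.IsTree) {i k : V}
    (hik : i ≠ k) : ∃! j, G.Adj i j ∧ ¬ (G.deleteEdges {s(i, j)}).Reachable i k := by
  classical
  obtain ⟨p, hp⟩ := (hT.connected.preconnected i k).some.toPath
  obtain ⟨c, hic, q, rfl⟩ := p.exists_eq_cons_of_ne hik
  have hiq : i ∉ q.support := ((Walk.cons_isPath_iff _ _).mp hp).2
  refine ⟨c, ⟨hic, fun hik' => ?_⟩, fun j ⟨_, hsep⟩ => ?_⟩
  · have hck : (G.deleteEdges {s(i, c)}).Reachable c k :=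
      reachable_deleteEdges_iff_exists_walk.mpr
        ⟨q, fun h => hiq (q.fst_mem_support_of_mem_edges h)⟩
    exact (hT.reachable_deleteEdges_iff hic k).mp hik' hck
  · rcases List.mem_cons.mp ((Walk.cons hic q).mem_edges_of_not_reachable_deleteEdges hsep)
      with h | h
    · exact Sym2.congr_right.mp h
    · exact absurd (q.fst_mem_support_of_mem_edges h) hiq

end SimpleGraph

section OrientedTree

variable {V E : Type*} {G : SimpleGraph V} {s t : E → V}

def incidence [DecidableEq V] (s t : E → V) (i : V) (e : E) : ℝ :=
  if s e = i then 1 else if t e = i then -1 else 0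

open scoped Classical in
/-- `1[k ∈ V*(s e; e)]`, bundled as a definition so that the decidability instance of its
condition does not depend on the instances in context. -/
noncomputable def cutIndicator (G : SimpleGraph V) (s t : E → V) (e : E) (k : V) : ℝ :=
  if (G.deleteEdges {s(s e, t e)}).Reachable (s e) k then 1 else 0

lemma Kcut_eq_sum_cutIndicator_mul [Fintype V] (μ : V → ℝ) (e : E) :
    Kcut G s t μ e = ∑ k, cutIndicator G s t e k * μ k := by
  unfold Kcut cutIndicator
  exact Finset.sum_congr rfl fun k _ => by split_ifs <;> simp

lemma Kcut_sub [Fintype V] (μ ν : V → ℝ) (e : E) :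
    Kcut G s t (μ - ν) e = Kcut G s t μ e - Kcut G s t ν e := by
  simp only [Kcut_eq_sum_cutIndicator_mul, Pi.sub_apply, mul_sub, Finset.sum_sub_distrib]

lemma existsUnique_incident_not_reachable_deleteEdges (hT : G.IsTree)
    (hadj : ∀ e, G.Adj (s e) (t e))
    (hbij : ∀ a b : V, G.Adj a b → ∃! e : E, (s e = a ∧ t e = b) ∨ (s e = b ∧ t e = a))
    {i k : V} (hik : i ≠ k) :
    ∃! e : E, (s e = i ∨ t e = i) ∧ ¬ (G.deleteEdges {s(s e, t e)}).Reachable i k := by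
  have other_end : ∀ e, s e = i ∨ t e = i →
      ∃ j, (s e = i ∧ t e = j) ∨ (s e = j ∧ t e = i) := by
    rintro e (h | h)
    exacts [⟨t e, .inl ⟨h, rfl⟩⟩, ⟨s e, .inr ⟨rfl, h⟩⟩]
  obtain ⟨j, ⟨hij, hsep⟩, hj_unique⟩ := hT.existsUnique_adj_not_reachable_deleteEdges hik
  obtain ⟨e, he, he_unique⟩ := hbij i j hij
  refine ⟨e, ⟨he.imp And.left And.right, Sym2.eq_iff.mpr he ▸ hsep⟩,
    fun e' ⟨hinc', hsep'⟩ => ?_⟩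
  obtain ⟨j', he'⟩ := other_end e' hinc'
  have hse' : s(s e', t e') = s(i, j') := Sym2.eq_iff.mpr he'
  have hij' : G.Adj i j' := by simpa [← SimpleGraph.mem_edgeSet, hse'] using hadj e'
  obtain rfl : j' = j := hj_unique j' ⟨hij', hse' ▸ hsep'⟩
  exact he_unique e' he'

open scoped Classical in
/-- When `t e = i`, the side `V*(s e; e)` is the complement of `V*(i; e)`. -/
lemma incidence_mul_cutIndicator [DecidableEq V] (hT : G.IsTree)
    (hadj : ∀ e, G.Adj (s e) (t e)) (i k : V) (e : E) :
    incidence s t i e * cutIndicator G s t e k =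
      (if s e = i then 1 else 0) -
        if (s e = i ∨ t e = i) ∧ ¬ (G.deleteEdges {s(s e, t e)}).Reachable i k
        then 1 else 0 := by
  unfold incidence cutIndicator
  by_cases hs : s e = i
  · subst hs
    by_cases hr : (G.deleteEdges {s(s e, t e)}).Reachable (s e) k <;> simp [hr]
  · by_cases ht : t e = i
    · subst ht
      rw [hT.reachable_deleteEdges_iff (hadj e)]
      by_cases hr : (G.deleteEdges {s(s e, t e)}).Reachable (t e) k <;> simp [hs, hr]
    · simp [hs, ht]

open scoped Classical in
lemma sum_indicator_incident_not_reachable [Fintype E] [DecidableEq V] (hT : G.IsTree)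
    (hadj : ∀ e, G.Adj (s e) (t e))
    (hbij : ∀ a b : V, G.Adj a b → ∃! e : E, (s e = a ∧ t e = b) ∨ (s e = b ∧ t e = a))
    (i k : V) :
    ∑ e, (if (s e = i ∨ t e = i) ∧ ¬ (G.deleteEdges {s(s e, t e)}).Reachable i k
      then (1 : ℝ) else 0) = if k = i then 0 else 1 := by
  by_cases hki : k = i
  · subst hki
    simp
  · obtain ⟨e₀, he₀, huniq⟩ :=
      existsUnique_incident_not_reachable_deleteEdges hT hadj hbij (Ne.symm hki)
    rw [if_neg hki, Finset.sum_boole, Nat.cast_eq_one, Finset.card_eq_one]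
    exact ⟨e₀, by ext e; simpa using ⟨fun h => huniq e h, fun h => h ▸ he₀⟩⟩

lemma sum_incidence_mul_Kcut [Fintype V] [Fintype E] [DecidableEq V] (hT : G.IsTree)
    (hadj : ∀ e, G.Adj (s e) (t e))
    (hbij : ∀ a b : V, G.Adj a b → ∃! e : E, (s e = a ∧ t e = b) ∨ (s e = b ∧ t e = a))
    {f : V → ℝ} (hf : ∑ k, f k = 0) (i : V) :
    ∑ e, incidence s t i e * Kcut G s t f e = f i := by
  set a : ℝ := ∑ e, if s e = i then 1 else 0
  have hcol : ∀ k, ∑ e, incidence s t i e * cutIndicator G s t e k =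
      a - if k = i then 0 else 1 := fun k => by
    simp only [incidence_mul_cutIndicator hT hadj, Finset.sum_sub_distrib,
      sum_indicator_incident_not_reachable hT hadj hbij, a]
  calc ∑ e, incidence s t i e * Kcut G s t f e
      = ∑ k, (∑ e, incidence s t i e * cutIndicator G s t e k) * f k := by
        simp only [Kcut_eq_sum_cutIndicator_mul, Finset.mul_sum, Finset.sum_mul, mul_assoc]
        exact Finset.sum_comm
    _ = ∑ k, (a - if k = i then 0 else 1) * f k := by simp only [hcol]
    _ = ∑ k, ((a - 1) * f k + if k = i then f k else 0) :=
        Finset.sum_congr rfl fun k _ => by split_ifs <;> ring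
    _ = (a - 1) * ∑ k, f k + f i := by
        rw [Finset.sum_add_distrib, Finset.mul_sum, Fintype.sum_ite_eq']
    _ = f i := by rw [hf]; ring

end OrientedTree

theorem stmt_7_general {V E : Type*} [Fintype V] [Fintype E] [DecidableEq V]
    (G : SimpleGraph V) (hT : G.IsTree)
    (s t : E → V) (hadj : ∀ e, G.Adj (s e) (t e))
    (hbij : ∀ a b : V, G.Adj a b →
      ∃! e : E, (s e = a ∧ t e = b) ∨ (s e = b ∧ t e = a))
    (μ ν : V → ℝ) (hμ1 : ∑ k, μ k = 1)
    (hν1 : ∑ k, ν k = 1) :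
    ∀ i : V,
      (∑ e, if s e = i then Kcut G s t μ e - Kcut G s t ν e
            else if t e = i then -(Kcut G s t μ e - Kcut G s t ν e) else 0) =
        μ i - ν i := by
  intro i
  have hmass : ∑ k, (μ - ν) k = 0 := by simp [Finset.sum_sub_distrib, hμ1, hν1]
  refine (Finset.sum_congr rfl fun e _ => ?_).trans (sum_incidence_mul_Kcut hT hadj hbij hmass i)
  rw [Kcut_sub, incidence]
  split_ifs <;> ring

theorem stmt_7 {V E : Type*} [Fintype V] [Fintype E] [DecidableEq V]
    (G : SimpleGraph V) (hT : G.IsTree)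
    (s t : E → V) (hadj : ∀ e, G.Adj (s e) (t e))
    (hbij : ∀ a b : V, G.Adj a b →
      ∃! e : E, (s e = a ∧ t e = b) ∨ (s e = b ∧ t e = a))
    (μ ν : V → ℝ) (hμ0 : ∀ k, 0 ≤ μ k) (hμ1 : ∑ k, μ k = 1)
    (hν0 : ∀ k, 0 ≤ ν k) (hν1 : ∑ k, ν k = 1) :
    ∀ i : V,
      (∑ e, if s e = i then Kcut G s t μ e - Kcut G s t ν e
            else if t e = i then -(Kcut G s t μ e - Kcut G s t ν e) else 0) =
        μ i - ν i :=
  stmt_7_general G hT s t hadj hbij μ ν hμ1 hν1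
end

section
/- Let T be a finite combinatorial tree, α ∈ [0,1), and i ≁ j two non-adjacent nodes. Let m_x^α be the α-lazy random walk measure at x (mass α at x and (1−α)/deg(x) at each neighbor of x). Then W₁(m_i^α, m_j^α) = d(i,j) + (1−α)·( (deg(i)−2)/deg(i) + (deg(j)−2)/deg(j) ). -/
/-- 1-Wasserstein distance on a graph w.r.t. the shortest path metric. -/
noncomputable def W1 {V : Type*} [Fintype V] (G : SimpleGraph V) (μ ν : V → ℝ) : ℝ :=
  sInf { c : ℝ | ∃ π : V → V → ℝ, (∀ i j, 0 ≤ π i j) ∧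
    (∀ j, ∑ i, π i j = μ j) ∧ (∀ i, ∑ j, π i j = ν i) ∧
    c = ∑ i, ∑ j, π i j * (G.dist i j : ℝ) }

/-- The α-lazy random walk measure at `x`. -/
noncomputable def lazy {V : Type*} [Fintype V] [DecidableEq V] (G : SimpleGraph V)
    [DecidableRel G.Adj] (α : ℝ) (x : V) : V → ℝ :=
  fun y => if y = x then α else if G.Adj x y then (1 - α) / (G.degree x : ℝ) else 0

/-
On the supports of the two measures the tree metric splits: for `a = j` or `a ∼ j` and `b = i` or
`b ∼ i`, `d(a, b) = d(a, i) + d(b, j) - d(i, j)`, because moving along an edge other than `ib` does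
not change on which side of the edge `ib` a vertex lies. Hence every coupling of `m_i^α` and
`m_j^α` has the same cost, namely `E_{m_i} d(·, j) - E_{m_j} (d(i, j) - d(·, i))`, and these
expectations are computed from the fact that exactly one neighbour of `i` is closer to `j`.
-/

namespace SimpleGraph

variable {V : Type*} {G : SimpleGraph V} {a b i j u u' x y y' z : V}

lemma Reachable.exists_adj_dist_add_one_eq (h : G.Reachable x z) (hne : x ≠ z) :
    ∃ y, G.Adj x y ∧ G.dist y z + 1 = G.dist x z := by
  obtain ⟨p, hp⟩ := h.exists_walk_length_eq_dist
  cases p with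
  | nil => exact absurd rfl hne
  | @cons _ y _ hxy q =>
    obtain ⟨r, hr⟩ := q.reachable.exists_walk_length_eq_dist
    have h₁ := dist_le q
    have h₂ := dist_le (Walk.cons hxy r)
    simp only [Walk.length_cons] at hp h₂
    exact ⟨y, hxy, by omega⟩

lemma IsTree.eq_of_adj_of_dist_add_one_eq (hT : G.IsTree) (hy : G.Adj x y) (hy' : G.Adj x y')
    (h : G.dist y z + 1 = G.dist x z) (h' : G.dist y' z + 1 = G.dist x z) : y = y' := by
  obtain ⟨q, hq⟩ := hT.connected.exists_walk_length_eq_dist y z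
  obtain ⟨q', hq'⟩ := hT.connected.exists_walk_length_eq_dist y' z
  have hp := (Walk.cons hy q).isPath_of_length_eq_dist (by simp [hq, h])
  have hp' := (Walk.cons hy' q').isPath_of_length_eq_dist (by simp [hq', h'])
  simpa using congrArg Walk.snd ((hT.existsUnique_path x z).unique hp hp')

lemma IsTree.dist_eq_dist_add_one_of_adj_of_ne (hT : G.IsTree) (hib : G.Adj i b)
    (huu' : G.Adj u u') (hne : s(u, u') ≠ s(i, b)) (hu : G.dist u b = G.dist u i + 1) :
    G.dist u' b = G.dist u' i + 1 := by
  have hc := hT.connected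
  refine (hT.dist_eq_dist_add_one_of_adj u' hib).resolve_left fun hu' ↦ ?_
  have h₁ : G.dist u u' = 1 := dist_eq_one_iff_adj.2 huu'
  have h₂ : G.dist u b ≤ G.dist u u' + G.dist u' b := hc.dist_triangle
  have h₃ : G.dist u' i ≤ G.dist u' u + G.dist u i := hc.dist_triangle
  have h₄ : G.dist u' u = G.dist u u' := dist_comm
  by_cases hui : u = i
  · subst hui
    have : u' = b := hc.dist_eq_zero_iff.1 (by omega)
    exact hne (by rw [this])
  -- the first step `c` from `i` towards `u` is also a first step towards `u'`, hence `c = b`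
  obtain ⟨c, hic, hcu⟩ := (hc i u).exists_adj_dist_add_one_eq (Ne.symm hui)
  have h₅ : G.dist c u' ≤ G.dist c u + G.dist u u' := hc.dist_triangle
  have h₆ : G.dist i u' ≤ G.dist i c + G.dist c u' := hc.dist_triangle
  have h₇ : G.dist i c = 1 := dist_eq_one_iff_adj.2 hic
  have h₈ : G.dist i u' = G.dist u' i := dist_comm
  have h₉ : G.dist i u = G.dist u i := dist_comm
  have h₁₀ : G.dist b u' = G.dist u' b := dist_comm
  have hcb : c = b := hT.eq_of_adj_of_dist_add_one_eq (z := u') hic hib (by omega) (by omega)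
  have h₁₁ : G.dist b u = G.dist u b := dist_comm
  subst hcb
  omega

lemma IsTree.dist_add_dist_eq_of_adj (hT : G.IsTree) (hib : G.Adj i b) (huu' : G.Adj u u')
    (hne : s(u, u') ≠ s(i, b)) :
    G.dist u b + G.dist u' i = G.dist u' b + G.dist u i := by
  rcases hT.dist_eq_dist_add_one_of_adj u hib with hu | hu
  · have := hT.dist_eq_dist_add_one_of_adj_of_ne hib.symm huu' (by rwa [Sym2.eq_swap (a := b)]) hu
    omega
  · have := hT.dist_eq_dist_add_one_of_adj_of_ne hib huu' hne hu
    omega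

lemma IsTree.sum_dist_neighborFinset_add_two (hT : G.IsTree) [Fintype (G.neighborSet x)]
    (hxz : x ≠ z) :
    ∑ y ∈ G.neighborFinset x, G.dist y z + 2 = G.degree x * (G.dist x z + 1) := by
  classical
  obtain ⟨y₀, hy₀, hd₀⟩ := (hT.connected x z).exists_adj_dist_add_one_eq hxz
  have hmem : y₀ ∈ G.neighborFinset x := (mem_neighborFinset ..).2 hy₀
  have hfar : ∀ y ∈ (G.neighborFinset x).erase y₀, G.dist y z = G.dist x z + 1 := by
    intro y hy
    obtain ⟨hne, hy⟩ := Finset.mem_erase.1 hy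
    have hxy := (mem_neighborFinset ..).1 hy
    have hzx : G.dist z x = G.dist x z := dist_comm
    have hzy : G.dist z y = G.dist y z := dist_comm
    have := (hT.dist_eq_dist_add_one_of_adj z hxy).resolve_left fun h ↦
      hne (hT.eq_of_adj_of_dist_add_one_eq hxy hy₀ (by omega) hd₀)
    omega
  rw [← Finset.add_sum_erase _ _ hmem, Finset.sum_congr rfl hfar, Finset.sum_const, smul_eq_mul,
    ← card_neighborFinset_eq_degree, ← Finset.card_erase_add_one hmem]
  ring_nf
  omega

lemma IsTree.dist_add_dist_eq_of_eq_or_adj (hT : G.IsTree) (hij : i ≠ j)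
    (hnadj : ¬G.Adj i j) (ha : a = j ∨ G.Adj j a) (hb : b = i ∨ G.Adj i b) :
    G.dist a b + G.dist i j = G.dist a i + G.dist b j := by
  have hji : G.dist j i = G.dist i j := dist_comm
  rcases hb with rfl | hib
  · rfl
  rcases ha with rfl | hja
  · rw [dist_comm (u := i), dist_comm (u := b), add_comm]
  have hne : s(j, a) ≠ s(i, b) := by
    rintro h
    rcases Sym2.eq_iff.1 h with ⟨rfl, -⟩ | ⟨rfl, -⟩
    exacts [hij rfl, hnadj hib]
  have := hT.dist_add_dist_eq_of_adj hib hja hne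
  have : G.dist j b = G.dist b j := dist_comm
  omega

end SimpleGraph

section Transport

variable {ι : Type*} [Fintype ι] {μ ν f g : ι → ℝ}

lemma sum_sum_mul_eq_sub_of_marginals {π c : ι → ι → ℝ} (hπ : ∀ a b, 0 ≤ π a b)
    (hμ : ∀ b, ∑ a, π a b = μ b) (hν : ∀ a, ∑ b, π a b = ν a)
    (hc : ∀ a b, ν a ≠ 0 → μ b ≠ 0 → c a b = f b - g a) :
    ∑ a, ∑ b, π a b * c a b = ∑ b, μ b * f b - ∑ a, ν a * g a := by
  have hsupp : ∀ a b, π a b * c a b = π a b * f b - π a b * g a := by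
    intro a b
    rcases (hπ a b).eq_or_lt with h | h
    · simp [← h]
    have hνa : ν a ≠ 0 := by
      rw [← hν a]
      exact (h.trans_le (Finset.single_le_sum (fun b _ ↦ hπ a b) (Finset.mem_univ b))).ne'
    have hμb : μ b ≠ 0 := by
      rw [← hμ b]
      exact (h.trans_le (Finset.single_le_sum (fun a _ ↦ hπ a b) (Finset.mem_univ a))).ne'
    rw [hc a b hνa hμb, mul_sub]
  simp only [hsupp, Finset.sum_sub_distrib]
  rw [Finset.sum_comm]
  simp only [← Finset.sum_mul, hμ, hν]

-- every coupling has the same cost, so the infimum is attained, e.g. by the product coupling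
lemma W1_eq_of_dist_eq_sub {G : SimpleGraph ι} (hμ : ∀ b, 0 ≤ μ b) (hν : ∀ a, 0 ≤ ν a)
    (hμ₁ : ∑ b, μ b = 1) (hν₁ : ∑ a, ν a = 1)
    (hd : ∀ a b, ν a ≠ 0 → μ b ≠ 0 → (G.dist a b : ℝ) = f b - g a) :
    W1 G μ ν = ∑ b, μ b * f b - ∑ a, ν a * g a := by
  have hprod : ∀ a b, 0 ≤ ν a * μ b := fun a b ↦ mul_nonneg (hν a) (hμ b)
  have hprodμ : ∀ b, ∑ a, ν a * μ b = μ b := by simp [← Finset.sum_mul, hν₁]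
  have hprodν : ∀ a, ∑ b, ν a * μ b = ν a := by simp [← Finset.mul_sum, hμ₁]
  have hcosts : {c : ℝ | ∃ π : ι → ι → ℝ, (∀ a b, 0 ≤ π a b) ∧
      (∀ b, ∑ a, π a b = μ b) ∧ (∀ a, ∑ b, π a b = ν a) ∧
      c = ∑ a, ∑ b, π a b * (G.dist a b : ℝ)} = {∑ b, μ b * f b - ∑ a, ν a * g a} := by
    ext c
    constructor
    · rintro ⟨π, hπ, hπμ, hπν, rfl⟩
      exact sum_sum_mul_eq_sub_of_marginals hπ hπμ hπν hd
    · rintro rfl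
      exact ⟨_, hprod, hprodμ, hprodν,
        (sum_sum_mul_eq_sub_of_marginals hprod hprodμ hprodν hd).symm⟩
  rw [W1, hcosts, csInf_singleton]

end Transport

section Lazy

variable {V : Type*} [Fintype V] [DecidableEq V] {G : SimpleGraph V} [DecidableRel G.Adj]
  {α : ℝ} {x y : V}

lemma lazy_nonneg (h₀ : 0 ≤ α) (h₁ : α ≤ 1) : 0 ≤ lazy G α x y := by
  unfold lazy
  split_ifs
  · exact h₀
  · exact div_nonneg (by linarith) (Nat.cast_nonneg _)
  · exact le_rfl

lemma eq_or_adj_of_lazy_ne_zero (h : lazy G α x y ≠ 0) : y = x ∨ G.Adj x y := by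
  unfold lazy at h
  split_ifs at h with h₁ h₂
  exacts [Or.inl h₁, Or.inr h₂, absurd rfl h]

lemma sum_lazy_mul (h : V → ℝ) :
    ∑ y, lazy G α x y * h y =
      α * h x + (1 - α) / G.degree x * ∑ y ∈ G.neighborFinset x, h y := by
  simp only [lazy, ite_mul, zero_mul, Finset.sum_ite, Finset.sum_const_zero, add_zero,
    Finset.filter_eq', Finset.mem_univ, if_true, Finset.sum_singleton, Finset.mul_sum]
  congr 1
  refine Finset.sum_congr (Finset.ext fun y ↦ ?_) fun _ _ ↦ rfl
  simpa using fun hxy : G.Adj x y ↦ hxy.ne'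

lemma sum_lazy (hx : G.degree x ≠ 0) : ∑ y, lazy G α x y = 1 := by
  simpa [SimpleGraph.card_neighborFinset_eq_degree, hx] using
    sum_lazy_mul (G := G) (α := α) (x := x) 1

end Lazy

theorem stmt_9 {V : Type*} [Fintype V] [DecidableEq V] (G : SimpleGraph V)
    [DecidableRel G.Adj] (hT : G.IsTree) (α : ℝ) (hα : α ∈ Set.Ico (0 : ℝ) 1)
    (i j : V) (hne : i ≠ j) (hnadj : ¬ G.Adj i j) :
    W1 G (lazy G α i) (lazy G α j) =
      (G.dist i j : ℝ) + (1 - α) *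
        (((G.degree i : ℝ) - 2) / (G.degree i : ℝ) +
         ((G.degree j : ℝ) - 2) / (G.degree j : ℝ)) := by
  have hdi : (G.degree i : ℝ) ≠ 0 := by
    exact_mod_cast ((hT.connected i j).degree_pos_left hne).ne'
  have hdj : (G.degree j : ℝ) ≠ 0 := by
    exact_mod_cast ((hT.connected j i).degree_pos_left hne.symm).ne'
  rw [W1_eq_of_dist_eq_sub (f := fun b ↦ (G.dist b j : ℝ)) (g := fun a ↦ G.dist i j - G.dist a i)
    (fun _ ↦ lazy_nonneg hα.1 hα.2.le) (fun _ ↦ lazy_nonneg hα.1 hα.2.le)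
    (sum_lazy (by exact_mod_cast hdi)) (sum_lazy (by exact_mod_cast hdj))]
  · have hi : ∑ b ∈ G.neighborFinset i, (G.dist b j : ℝ) + 2 = G.degree i * (G.dist i j + 1) := by
      exact_mod_cast hT.sum_dist_neighborFinset_add_two hne
    have hj : ∑ a ∈ G.neighborFinset j, (G.dist a i : ℝ) + 2 = G.degree j * (G.dist i j + 1) := by
      rw [SimpleGraph.dist_comm]
      exact_mod_cast hT.sum_dist_neighborFinset_add_two hne.symm
    simp only [sum_lazy_mul, Finset.sum_sub_distrib, Finset.sum_const, nsmul_eq_mul,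
      SimpleGraph.card_neighborFinset_eq_degree, SimpleGraph.dist_comm (u := j) (v := i)]
    rw [eq_sub_of_add_eq hi, eq_sub_of_add_eq hj]
    field_simp
    ring
  · intro a b ha hb
    have := hT.dist_add_dist_eq_of_eq_or_adj hne hnadj (eq_or_adj_of_lazy_ne_zero ha)
      (eq_or_adj_of_lazy_ne_zero hb)
    linarith [(by exact_mod_cast this : (G.dist a b : ℝ) + G.dist i j = G.dist a i + G.dist b j)]
end

section
/- Let T be a finite combinatorial tree, α ∈ [0,1), and {i,j} ∈ E an edge such that 1/deg(i) + 1/deg(j) > 1/(1−α). Then the Ollivier-Ricci curvature satisfies κ^{or,α}_{ij} = 2α. -/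
lemma W1_mem_symm {V : Type*} [Fintype V] (G : SimpleGraph V) (μ ν : V → ℝ) (c : ℝ)
    (hc : c ∈ { c : ℝ | ∃ π : V → V → ℝ, (∀ i j, 0 ≤ π i j) ∧
      (∀ j, ∑ i, π i j = μ j) ∧ (∀ i, ∑ j, π i j = ν i) ∧
      c = ∑ i, ∑ j, π i j * (G.dist i j : ℝ) }) :
    c ∈ { c : ℝ | ∃ π : V → V → ℝ, (∀ i j, 0 ≤ π i j) ∧
      (∀ j, ∑ i, π i j = ν j) ∧ (∀ i, ∑ j, π i j = μ i) ∧
      c = ∑ i, ∑ j, π i j * (G.dist i j : ℝ) } := by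
  obtain ⟨π, h0, hcol, hrow, hcost⟩ := hc
  refine ⟨fun x y => π y x, fun x y => h0 y x, fun y => hrow y, fun x => hcol x, ?_⟩
  rw [hcost, Finset.sum_comm]
  exact Finset.sum_congr rfl fun x _ => Finset.sum_congr rfl fun y _ => by
    rw [SimpleGraph.dist_comm]

lemma W1_symm {V : Type*} [Fintype V] (G : SimpleGraph V) (μ ν : V → ℝ) :
    W1 G μ ν = W1 G ν μ := by
  unfold W1
  congr 1
  ext c
  exact ⟨fun h => W1_mem_symm G μ ν c h, fun h => W1_mem_symm G ν μ c h⟩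

lemma leaf_W1 {V : Type*} [Fintype V] [DecidableEq V] (G : SimpleGraph V)
    [DecidableRel G.Adj] (hconn : G.Connected) (α : ℝ) (hα0 : 0 ≤ α)
    (i j : V) (hadj : G.Adj i j) (hdi : G.degree i = 1)
    (hβ : α ≤ (1 - α) / (G.degree j : ℝ)) :
    W1 G (lazy G α i) (lazy G α j) = 1 - 2 * α := by
  classical
  set q : ℝ := (1 - α) / (G.degree j : ℝ) with hqdef
  set s : Finset V := (G.neighborFinset j).erase i with hsdef
  have hij : i ≠ j := hadj.ne
  have hji : G.Adj j i := hadj.symm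
  have himem : i ∈ G.neighborFinset j := by simpa using hji
  have hdj0 : 0 < G.degree j := by
    rw [← SimpleGraph.card_neighborFinset_eq_degree]
    exact Finset.card_pos.mpr ⟨i, himem⟩
  have hdjR : (0:ℝ) < (G.degree j : ℝ) := by exact_mod_cast hdj0
  have hq0 : 0 ≤ q := le_trans hα0 hβ
  have hqd : (G.degree j : ℝ) * q = 1 - α := by
    rw [hqdef]; field_simp
  have hcards : (s.card : ℝ) = (G.degree j : ℝ) - 1 := by
    rw [hsdef, Finset.card_erase_of_mem himem, SimpleGraph.card_neighborFinset_eq_degree,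
      Nat.cast_sub hdj0, Nat.cast_one]
  -- the only neighbor of i is j
  have hNi : G.neighborFinset i = {j} := by
    have hjmem : j ∈ G.neighborFinset i := by simpa using hadj
    have hcard1 : (G.neighborFinset i).card = 1 := by
      rw [SimpleGraph.card_neighborFinset_eq_degree, hdi]
    obtain ⟨a, ha⟩ := Finset.card_eq_one.mp hcard1
    rw [ha] at hjmem ⊢
    rw [Finset.mem_singleton] at hjmem
    rw [hjmem]
  have hAdji : ∀ y, G.Adj i y ↔ y = j := fun y => by
    rw [← SimpleGraph.mem_neighborFinset, hNi, Finset.mem_singleton]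
  have hμj : lazy G α i j = 1 - α := by
    simp [lazy, hij.symm, hadj, hdi]
  have hνj : lazy G α j j = α := by simp [lazy]
  have hνi : lazy G α j i = q := by simp [lazy, hij, hji, hqdef]
  -- the coupling
  set a : V → ℝ := fun x => if x = i then α else 0 with hadef
  set c : V → ℝ := fun x =>
    (if x = i then q - α else 0) + (if x = j then α else 0) + (if x ∈ s then q else 0)
    with hcdef
  set π : V → V → ℝ := fun x y => if y = i then a x else if y = j then c x else 0 with hπdef
  have hinots : i ∉ s := Finset.notMem_erase i _
  have hjnots : j ∉ s := by
    simp [hsdef]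
  have hπ0 : ∀ x y, 0 ≤ π x y := by
    intro x y
    rw [hπdef]
    dsimp only
    rw [hadef, hcdef]
    dsimp only
    split_ifs <;> linarith
  have hcol : ∀ y, ∑ x, π x y = lazy G α i y := by
    intro y
    by_cases hyi : y = i
    · have hpt : ∀ x, π x y = (if x = i then α else 0) := by
        intro x
        rw [hπdef]
        simp [hyi, hadef]
      rw [Finset.sum_congr rfl (fun x _ => hpt x),
        Finset.sum_ite_eq' Finset.univ i (fun _ => (α : ℝ))]
      simp [lazy, hyi]
    · by_cases hyj : y = j
      · have hpt : ∀ x, π x y = c x := by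
          intro x
          rw [hπdef]
          simp [hyi, hyj, hij.symm]
        rw [Finset.sum_congr rfl (fun x _ => hpt x), hyj, hμj]
        simp only [hcdef]
        rw [Finset.sum_add_distrib, Finset.sum_add_distrib,
          Finset.sum_ite_eq' Finset.univ i (fun _ => q - α),
          Finset.sum_ite_eq' Finset.univ j (fun _ => α),
          Finset.sum_ite_mem, Finset.univ_inter, Finset.sum_const, nsmul_eq_mul]
        simp only [Finset.mem_univ, if_pos]
        rw [hcards]
        linarith [hqd]
      · have hpt : ∀ x, π x y = 0 := by
          intro x
          rw [hπdef]
          simp [hyi, hyj]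
        rw [Finset.sum_congr rfl (fun x _ => hpt x), Finset.sum_const_zero]
        have : ¬ G.Adj i y := fun h => hyj ((hAdji y).mp h)
        simp [lazy, hyi, this]
  have hrowsum : ∀ x, ∑ y, π x y = a x + c x := by
    intro x
    have hpt : ∀ y, π x y = (if y = i then a x else 0) + (if y = j then c x else 0) := by
      intro y
      rw [hπdef]
      by_cases h1 : y = i
      · simp [h1, hij, hij.symm]
      · by_cases h2 : y = j <;> simp [h1, h2, hij, hij.symm]
    rw [Finset.sum_congr rfl (fun y _ => hpt y), Finset.sum_add_distrib,
      Finset.sum_ite_eq' Finset.univ i (fun _ => a x),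
      Finset.sum_ite_eq' Finset.univ j (fun _ => c x)]
    simp
  have hrow : ∀ x, ∑ y, π x y = lazy G α j x := by
    intro x
    rw [hrowsum x]
    rw [hadef, hcdef]
    dsimp only
    by_cases hxi : x = i
    · rw [hxi, if_pos rfl, if_pos rfl, if_neg hij, if_neg hinots, hνi]
      ring
    · by_cases hxj : x = j
      · rw [hxj, if_neg hij.symm, if_neg hij.symm, if_pos rfl, if_neg hjnots, hνj]
        ring
      · by_cases hxs : x ∈ s
        · have hadjx : G.Adj j x := by
            have := Finset.mem_of_mem_erase (hsdef ▸ hxs)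
            simpa using this
          rw [if_neg hxi, if_neg hxi, if_neg hxj, if_pos hxs]
          simp [lazy, hxj, hadjx, hqdef]
        · have hnadj : ¬ G.Adj j x := by
            intro h
            exact hxs (by rw [hsdef]; exact Finset.mem_erase.mpr ⟨hxi, by simpa using h⟩)
          rw [if_neg hxi, if_neg hxi, if_neg hxj, if_neg hxs]
          simp [lazy, hxj, hnadj]
  have hdistij : (G.dist i j : ℝ) = 1 := by
    rw [SimpleGraph.dist_eq_one_iff_adj.mpr hadj, Nat.cast_one]
  have hcost : ∑ x, ∑ y, π x y * (G.dist x y : ℝ) = 1 - 2 * α := by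
    have hpt : ∀ x, ∑ y, π x y * (G.dist x y : ℝ)
        = a x * (G.dist x i : ℝ) + c x * (G.dist x j : ℝ) := by
      intro x
      have h1 : ∀ y, π x y * (G.dist x y : ℝ)
          = (if y = i then a x * (G.dist x i : ℝ) else 0)
            + (if y = j then c x * (G.dist x j : ℝ) else 0) := by
        intro y
        rw [hπdef]
        by_cases hy1 : y = i
        · simp [hy1, hij, hij.symm]
        · by_cases hy2 : y = j
          · simp [hy1, hy2, hij, hij.symm]
          · simp [hy1, hy2]
      rw [Finset.sum_congr rfl (fun y _ => h1 y), Finset.sum_add_distrib,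
        Finset.sum_ite_eq' Finset.univ i, Finset.sum_ite_eq' Finset.univ j]
      simp
    rw [Finset.sum_congr rfl (fun x _ => hpt x), Finset.sum_add_distrib]
    have hA : ∑ x, a x * (G.dist x i : ℝ) = 0 := by
      have : ∀ x, a x * (G.dist x i : ℝ) = if x = i then α * (G.dist x i : ℝ) else 0 := by
        intro x; rw [hadef]; dsimp only; split_ifs <;> simp
      rw [Finset.sum_congr rfl (fun x _ => this x), Finset.sum_ite_eq' Finset.univ i]
      simp
    have hC : ∑ x, c x * (G.dist x j : ℝ) = 1 - 2 * α := by
      have : ∀ x, c x * (G.dist x j : ℝ)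
          = (if x = i then (q - α) * (G.dist x j : ℝ) else 0)
            + (if x = j then α * (G.dist x j : ℝ) else 0)
            + (if x ∈ s then q * (G.dist x j : ℝ) else 0) := by
        intro x; rw [hcdef]; dsimp only; split_ifs <;> ring
      rw [Finset.sum_congr rfl (fun x _ => this x), Finset.sum_add_distrib,
        Finset.sum_add_distrib, Finset.sum_ite_eq' Finset.univ i,
        Finset.sum_ite_eq' Finset.univ j, Finset.sum_ite_mem, Finset.univ_inter]
      have hs1 : ∑ x ∈ s, q * (G.dist x j : ℝ) = s.card * q := by
        rw [Finset.sum_congr rfl (fun x hx => ?_), Finset.sum_const, nsmul_eq_mul]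
        have hadjx : G.Adj x j := by
          have := Finset.mem_of_mem_erase (hsdef ▸ hx)
          exact (by simpa using this : G.Adj j x).symm
        rw [SimpleGraph.dist_eq_one_iff_adj.mpr hadjx, Nat.cast_one, mul_one]
      rw [hs1, hcards]
      simp only [Finset.mem_univ, if_pos, hdistij, SimpleGraph.dist_self, Nat.cast_zero]
      nlinarith [hqd]
    rw [hA, hC]; ring
  have hmem : (1 - 2 * α) ∈ { c : ℝ | ∃ π : V → V → ℝ, (∀ x y, 0 ≤ π x y) ∧
      (∀ y, ∑ x, π x y = lazy G α i y) ∧ (∀ x, ∑ y, π x y = lazy G α j x) ∧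
      c = ∑ x, ∑ y, π x y * (G.dist x y : ℝ) } :=
    ⟨π, hπ0, hcol, hrow, hcost.symm⟩
  -- lower bound for arbitrary members of the set
  have hlb : ∀ b ∈ { c : ℝ | ∃ π : V → V → ℝ, (∀ x y, 0 ≤ π x y) ∧
      (∀ y, ∑ x, π x y = lazy G α i y) ∧ (∀ x, ∑ y, π x y = lazy G α j x) ∧
      c = ∑ x, ∑ y, π x y * (G.dist x y : ℝ) }, 1 - 2 * α ≤ b := by
    rintro b ⟨ρ, h0, hcol', hrow', rfl⟩
    have step1 : ∑ x, ρ x j * (G.dist x j : ℝ) ≤ ∑ x, ∑ y, ρ x y * (G.dist x y : ℝ) := by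
      refine Finset.sum_le_sum fun x _ => ?_
      exact Finset.single_le_sum (f := fun y => ρ x y * (G.dist x y : ℝ))
        (fun y _ => mul_nonneg (h0 x y) (Nat.cast_nonneg _)) (Finset.mem_univ j)
    have step2 : ∑ x ∈ Finset.univ.erase j, ρ x j ≤ ∑ x, ρ x j * (G.dist x j : ℝ) := by
      calc ∑ x ∈ Finset.univ.erase j, ρ x j
          ≤ ∑ x ∈ Finset.univ.erase j, ρ x j * (G.dist x j : ℝ) := by
            refine Finset.sum_le_sum fun x hx => ?_
            have hxj : x ≠ j := (Finset.mem_erase.mp hx).1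
            have hd1 : (1:ℝ) ≤ (G.dist x j : ℝ) := by
              have := hconn.pos_dist_of_ne hxj
              exact_mod_cast this
            nlinarith [h0 x j]
        _ ≤ ∑ x, ρ x j * (G.dist x j : ℝ) := by
            refine Finset.sum_le_sum_of_subset_of_nonneg (Finset.erase_subset _ _)
              fun x _ _ => mul_nonneg (h0 x j) (Nat.cast_nonneg _)
    have step3 : ∑ x ∈ Finset.univ.erase j, ρ x j = (1 - α) - ρ j j := by
      rw [Finset.sum_erase_eq_sub (Finset.mem_univ j), hcol' j, hμj]
    have step4 : ρ j j ≤ α := by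
      have := Finset.single_le_sum (f := fun y => ρ j y) (fun y _ => h0 j y)
        (Finset.mem_univ j)
      rw [hrow' j, hνj] at this
      exact this
    linarith
  have hbdd : BddBelow { c : ℝ | ∃ π : V → V → ℝ, (∀ x y, 0 ≤ π x y) ∧
      (∀ y, ∑ x, π x y = lazy G α i y) ∧ (∀ x, ∑ y, π x y = lazy G α j x) ∧
      c = ∑ x, ∑ y, π x y * (G.dist x y : ℝ) } :=
    ⟨1 - 2 * α, fun b hb => hlb b hb⟩
  refine le_antisymm (csInf_le hbdd hmem) (le_csInf ⟨_, hmem⟩ hlb)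

theorem stmt_12 {V : Type*} [Fintype V] [DecidableEq V] (G : SimpleGraph V)
    [DecidableRel G.Adj] (hT : G.IsTree) (α : ℝ) (hα : α ∈ Set.Ico (0 : ℝ) 1)
    (i j : V) (hadj : G.Adj i j)
    (hcond : 1 / (1 - α) < 1 / (G.degree i : ℝ) + 1 / (G.degree j : ℝ)) :
    1 - W1 G (lazy G α i) (lazy G α j) / (G.dist i j : ℝ) = 2 * α := by
  obtain ⟨hα0, hα1⟩ := hα
  have h1α : (0:ℝ) < 1 - α := by linarith
  have hconn : G.Connected := hT.isConnected
  have hdi0 : 0 < G.degree i := by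
    rw [← SimpleGraph.card_neighborFinset_eq_degree]
    exact Finset.card_pos.mpr ⟨j, by simpa using hadj⟩
  have hdj0 : 0 < G.degree j := by
    rw [← SimpleGraph.card_neighborFinset_eq_degree]
    exact Finset.card_pos.mpr ⟨i, by simpa using hadj.symm⟩
  have hdiR : (1:ℝ) ≤ (G.degree i : ℝ) := by exact_mod_cast hdi0
  have hdjR : (1:ℝ) ≤ (G.degree j : ℝ) := by exact_mod_cast hdj0
  -- one of the endpoints is a leaf
  have hleaf : G.degree i = 1 ∨ G.degree j = 1 := by
    by_contra h
    push_neg at h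
    obtain ⟨h1, h2⟩ := h
    have hi2 : (2:ℝ) ≤ (G.degree i : ℝ) := by
      have : 2 ≤ G.degree i := by omega
      exact_mod_cast this
    have hj2 : (2:ℝ) ≤ (G.degree j : ℝ) := by
      have : 2 ≤ G.degree j := by omega
      exact_mod_cast this
    have hle1 : 1 / (G.degree i : ℝ) + 1 / (G.degree j : ℝ) ≤ 1 := by
      have hi : 1 / (G.degree i : ℝ) ≤ 1/2 := by
        rw [div_le_div_iff₀ (by linarith) (by norm_num)]; linarith
      have hj : 1 / (G.degree j : ℝ) ≤ 1/2 := by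
        rw [div_le_div_iff₀ (by linarith) (by norm_num)]; linarith
      linarith
    have hge1 : (1:ℝ) ≤ 1 / (1 - α) := by
      rw [le_div_iff₀ h1α]; linarith
    linarith
  have hdist : (G.dist i j : ℝ) = 1 := by
    rw [SimpleGraph.dist_eq_one_iff_adj.mpr hadj, Nat.cast_one]
  have hW : W1 G (lazy G α i) (lazy G α j) = 1 - 2 * α := by
    rcases hleaf with hdi | hdj
    · -- i is a leaf
      have hcond' : 1 / (1 - α) < 1 + 1 / (G.degree j : ℝ) := by
        rw [hdi] at hcond
        simp only [Nat.cast_one] at hcond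
        linarith
      have hβ : α ≤ (1 - α) / (G.degree j : ℝ) := by
        have hdjpos : (0:ℝ) < (G.degree j : ℝ) := by linarith
        rw [div_lt_iff₀ h1α] at hcond'
        have hexp : (1 + 1 / (G.degree j : ℝ)) * (1 - α)
            = (1 - α) + (1 - α) / (G.degree j : ℝ) := by
          field_simp
        rw [hexp] at hcond'
        linarith
      exact leaf_W1 G hconn α hα0 i j hadj hdi hβ
    · -- j is a leaf
      have hcond' : 1 / (1 - α) < 1 + 1 / (G.degree i : ℝ) := by
        rw [hdj] at hcond
        simp only [Nat.cast_one] at hcond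
        linarith
      have hβ : α ≤ (1 - α) / (G.degree i : ℝ) := by
        have hdipos : (0:ℝ) < (G.degree i : ℝ) := by linarith
        rw [div_lt_iff₀ h1α] at hcond'
        have hexp : (1 + 1 / (G.degree i : ℝ)) * (1 - α)
            = (1 - α) + (1 - α) / (G.degree i : ℝ) := by
          field_simp
        rw [hexp] at hcond'
        linarith
      rw [W1_symm]
      exact leaf_W1 G hconn α hα0 j i hadj.symm hdj hβ
  rw [hW, hdist]
  ring
end

section
/- Let T be a finite combinatorial tree on n ≥ 3 nodes and {i,j} ∈ E an edge with deg(i) ≥ 2 and deg(j) ≥ 2 (i.e., not a leaf edge), and α ∈ [0,1). Then 0 ≥ κ^{or,α}_{ij} ≥ κ^{lly}_{ij} > max over x ∈ {i,j} of (4/deg(x))·(κ^s_x − 1/2), where κ^{or,α}_{ij} = 2(1−α)(1/deg(i)+1/deg(j)−1), κ^{lly}_{ij} = 2(1/deg(i)+1/deg(j)−1), and κ^s_x = (n/(n−1))(2−deg(x)). -/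
lemma key_16 (a b N : ℝ) (ha : 2 ≤ a) (hb : 2 ≤ b) (hN : 3 ≤ N) :
    2 * (1 / a + 1 / b - 1) > (4 / a) * (N / (N - 1) * (2 - a) - 1/2) := by
  have ha0 : (0:ℝ) < a := by linarith
  have hb0 : (0:ℝ) < b := by linarith
  have hN1 : (0:ℝ) < N - 1 := by linarith
  rw [gt_iff_lt, div_mul_eq_mul_div, div_lt_iff₀ ha0]
  have h1 : 1 / a = a⁻¹ := one_div a
  have h2 : 1 / b = b⁻¹ := one_div b
  have hai : a * a⁻¹ = 1 := mul_inv_cancel₀ (ne_of_gt ha0)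
  have hbi : b * b⁻¹ = 1 := mul_inv_cancel₀ (ne_of_gt hb0)
  have hNd : N / (N - 1) * (N - 1) = N := div_mul_cancel₀ N (ne_of_gt hN1)
  have hNge : N / (N - 1) > 1 := (one_lt_div hN1).2 (by linarith)
  have hbpos : (0:ℝ) < b⁻¹ := inv_pos.2 hb0
  nlinarith [mul_pos ha0 hbpos, mul_nonneg (sub_nonneg.2 ha) (sub_nonneg.2 (le_of_lt hNge)),
    mul_nonneg (mul_nonneg (sub_nonneg.2 ha) (sub_nonneg.2 hNge.le)) ha0.le]

theorem stmt_16 {V : Type*} [Fintype V] [DecidableEq V] (G : SimpleGraph V)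
    [DecidableRel G.Adj] (hT : G.IsTree) (hn : 3 ≤ Fintype.card V)
    (i j : V) (hadj : G.Adj i j) (hdi : 2 ≤ G.degree i) (hdj : 2 ≤ G.degree j)
    (α : ℝ) (hα : α ∈ Set.Ico (0 : ℝ) 1) :
    0 ≥ 2 * (1 - α) * (1 / (G.degree i : ℝ) + 1 / (G.degree j : ℝ) - 1) ∧
      2 * (1 - α) * (1 / (G.degree i : ℝ) + 1 / (G.degree j : ℝ) - 1) ≥
        2 * (1 / (G.degree i : ℝ) + 1 / (G.degree j : ℝ) - 1) ∧
      2 * (1 / (G.degree i : ℝ) + 1 / (G.degree j : ℝ) - 1) >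
        max
          ((4 / (G.degree i : ℝ)) *
            ((Fintype.card V : ℝ) / ((Fintype.card V : ℝ) - 1) * (2 - (G.degree i : ℝ)) - 1/2))
          ((4 / (G.degree j : ℝ)) *
            ((Fintype.card V : ℝ) / ((Fintype.card V : ℝ) - 1) * (2 - (G.degree j : ℝ)) - 1/2)) := by
  obtain ⟨hα0, hα1⟩ := hα
  have ha : (2:ℝ) ≤ (G.degree i : ℝ) := by exact_mod_cast hdi
  have hb : (2:ℝ) ≤ (G.degree j : ℝ) := by exact_mod_cast hdj
  have hN : (3:ℝ) ≤ (Fintype.card V : ℝ) := by exact_mod_cast hn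
  set a : ℝ := (G.degree i : ℝ)
  set b : ℝ := (G.degree j : ℝ)
  have ha0 : (0:ℝ) < a := by linarith
  have hb0 : (0:ℝ) < b := by linarith
  have hs : 1 / a + 1 / b - 1 ≤ 0 := by
    have h1 : 1 / a ≤ 1 / 2 := by
      apply one_div_le_one_div_of_le <;> linarith
    have h2 : 1 / b ≤ 1 / 2 := by
      apply one_div_le_one_div_of_le <;> linarith
    linarith
  refine ⟨by nlinarith, by nlinarith, ?_⟩
  rw [gt_iff_lt, max_lt_iff]
  constructor
  · exact key_16 a b _ ha hb hN
  · have := key_16 b a _ hb ha hN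
    linarith [this]
end
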